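/- Let p ∈ (0,∞) and (M,d,+) a complete metric semigroup. A set A ⊆ WBV_p(I×I,M) is precompact with respect to the metric ρ_p if: (i) A is joint equivariated, i.e., for every ε>0 there exist partitions Π_ε, Π*_ε of [0,1] such that V_p(f,g) ≤ ε + V_p(f,g,Π_ε×Π*_ε) for all f,g ∈ A; and (ii) for every t,s ∈ [0,1], the set {f(t,s) : f ∈ A} is precompact in M. -/
import Mathlib


open Finset

/-- `t` represents a partition `0 = t 0 < t 1 < ⋯ < t n = 1` of `[0,1]`. -/
def IsPartition (n : ℕ) (t : ℕ → ℝ) : Prop :=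
  0 < n ∧ t 0 = 0 ∧ t n = 1 ∧ ∀ i < n, t i < t (i + 1)

/-- `normW p x = x ^ (1/p)` when `p ≥ 1`, and `x` itself when `p < 1`,
matching the two cases in the definition of the Wiener `p`-variation. -/
noncomputable def normW (p x : ℝ) : ℝ := if 1 ≤ p then x ^ (1 / p) else x

variable {M : Type*} [MetricSpace M] [AddCommSemigroup M]

/-- Marginal partition sum `Σ_i d^p(f(t_i,0), f(t_{i-1},0))`. -/
noncomputable def wSum1 (p : ℝ) (f : ℝ → ℝ → M) (n : ℕ) (t : ℕ → ℝ) : ℝ :=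
  ∑ i ∈ range n, dist (f (t (i + 1)) 0) (f (t i) 0) ^ p

/-- Marginal partition sum `Σ_j d^p(f(0,s_j), f(0,s_{j-1}))`. -/
noncomputable def wSum2 (p : ℝ) (f : ℝ → ℝ → M) (m : ℕ) (s : ℕ → ℝ) : ℝ :=
  ∑ j ∈ range m, dist (f 0 (s (j + 1))) (f 0 (s j)) ^ p

/-- Double partition sum of the mixed differences. -/
noncomputable def wSum12 (p : ℝ) (f : ℝ → ℝ → M) (n : ℕ) (t : ℕ → ℝ)
    (m : ℕ) (s : ℕ → ℝ) : ℝ :=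
  ∑ j ∈ range m, ∑ i ∈ range n,
    dist (f (t (i + 1)) (s (j + 1)) + f (t i) (s j))
         (f (t (i + 1)) (s j) + f (t i) (s (j + 1))) ^ p

/-- Joint marginal sum for two functions. -/
noncomputable def wSum1J (p : ℝ) (f g : ℝ → ℝ → M) (n : ℕ) (t : ℕ → ℝ) : ℝ :=
  ∑ i ∈ range n,
    dist (f (t (i + 1)) 0 + g (t i) 0) (f (t i) 0 + g (t (i + 1)) 0) ^ p

noncomputable def wSum2J (p : ℝ) (f g : ℝ → ℝ → M) (m : ℕ) (s : ℕ → ℝ) : ℝ :=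
  ∑ j ∈ range m,
    dist (f 0 (s (j + 1)) + g 0 (s j)) (f 0 (s j) + g 0 (s (j + 1))) ^ p

noncomputable def wSum12J (p : ℝ) (f g : ℝ → ℝ → M) (n : ℕ) (t : ℕ → ℝ)
    (m : ℕ) (s : ℕ → ℝ) : ℝ :=
  ∑ j ∈ range m, ∑ i ∈ range n,
    dist (f (t (i + 1)) (s (j + 1)) + f (t i) (s j)
            + g (t (i + 1)) (s j) + g (t i) (s (j + 1)))
         (g (t (i + 1)) (s (j + 1)) + g (t i) (s j)
            + f (t (i + 1)) (s j) + f (t i) (s (j + 1))) ^ p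

/-- The set of partition values of `V_p(f(·,0), Π)`. -/
def wSet1 (p : ℝ) (f : ℝ → ℝ → M) : Set ℝ :=
  {x | ∃ n t, IsPartition n t ∧ x = normW p (wSum1 p f n t)}

def wSet2 (p : ℝ) (f : ℝ → ℝ → M) : Set ℝ :=
  {x | ∃ m s, IsPartition m s ∧ x = normW p (wSum2 p f m s)}

def wSet12 (p : ℝ) (f : ℝ → ℝ → M) : Set ℝ :=
  {x | ∃ n t m s, IsPartition n t ∧ IsPartition m s ∧ x = normW p (wSum12 p f n t m s)}

/-- Total Wiener `p`-variation `V_p(f) = V_p(f(·,0)) + V_p(f(0,·)) + V_{p,2}(f)`. -/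
noncomputable def Vp (p : ℝ) (f : ℝ → ℝ → M) : ℝ :=
  sSup (wSet1 p f) + sSup (wSet2 p f) + sSup (wSet12 p f)

/-- `f` has bounded Wiener `p`-variation on `I × I`. -/
def MemWBV (p : ℝ) (f : ℝ → ℝ → M) : Prop :=
  BddAbove (wSet1 p f) ∧ BddAbove (wSet2 p f) ∧ BddAbove (wSet12 p f)

/-- The joint variation of `f, g` over a fixed pair of partitions,
`V_p(f,g,Π×Π*)`. -/
noncomputable def VpPart (p : ℝ) (f g : ℝ → ℝ → M) (n : ℕ) (t : ℕ → ℝ)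
    (m : ℕ) (s : ℕ → ℝ) : ℝ :=
  normW p (wSum1J p f g n t) + normW p (wSum2J p f g m s) + normW p (wSum12J p f g n t m s)

def wSetJ (p : ℝ) (f g : ℝ → ℝ → M) : Set ℝ :=
  {x | ∃ n t m s, IsPartition n t ∧ IsPartition m s ∧ x = VpPart p f g n t m s}

/-- The joint Wiener `p`-variation `V_p(f,g)`. -/
noncomputable def VpJ (p : ℝ) (f g : ℝ → ℝ → M) : ℝ := sSup (wSetJ p f g)

/-- The metric `ρ_p(f,g) = d(f(0,0), g(0,0)) + V_p(f,g)` on `WBV_p(I×I, M)`. -/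
noncomputable def rhoP (p : ℝ) (f g : ℝ → ℝ → M) : ℝ :=
  dist (f 0 0) (g 0 0) + VpJ p f g


section Aux

variable {M : Type*} [MetricSpace M] [AddCommSemigroup M]

lemma dist_add_left' (hd : ∀ u v w : M, dist (u + w) (v + w) = dist u v)
    (w a b : M) : dist (w + a) (w + b) = dist a b := by
  rw [add_comm w a, add_comm w b]; exact hd a b w

lemma dist_cross (hd : ∀ u v w : M, dist (u + w) (v + w) = dist u v)
    (a b a' b' : M) : dist (a + b') (a' + b) ≤ dist a a' + dist b b' := by
  calc dist (a + b') (a' + b)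
      ≤ dist (a + b') (a' + b') + dist (a' + b') (a' + b) := dist_triangle _ _ _
    _ = dist a a' + dist b b' := by
        rw [hd, dist_add_left' hd, dist_comm b' b]

lemma dist_cross4 (hd : ∀ u v w : M, dist (u + w) (v + w) = dist u v)
    (a b c e a' b' c' e' : M) :
    dist (a + b + c' + e') (a' + b' + c + e)
      ≤ dist a a' + dist b b' + dist c c' + dist e e' := by
  have e1 : dist (a + b + c' + e') (a' + b + c' + e') = dist a a' := by
    rw [hd, hd, hd]
  have e2 : dist (a' + b + c' + e') (a' + b' + c' + e') = dist b b' := by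
    rw [hd, hd, dist_add_left' hd]
  have e3 : dist (a' + b' + c' + e') (a' + b' + c + e') = dist c' c := by
    rw [hd, dist_add_left' hd]
  have e4 : dist (a' + b' + c + e') (a' + b' + c + e) = dist e' e :=
    dist_add_left' hd _ _ _
  have t1 := dist_triangle (a + b + c' + e') (a' + b + c' + e') (a' + b' + c + e)
  have t2 := dist_triangle (a' + b + c' + e') (a' + b' + c' + e') (a' + b' + c + e)
  have t3 := dist_triangle (a' + b' + c' + e') (a' + b' + c + e') (a' + b' + c + e)
  have hc := dist_comm c' c
  have he := dist_comm e' e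
  linarith

lemma normW_mono {p : ℝ} (hp : 0 < p) {x y : ℝ} (hx : 0 ≤ x) (hxy : x ≤ y) :
    normW p x ≤ normW p y := by
  unfold normW; split_ifs with h
  · exact Real.rpow_le_rpow hx hxy (by positivity)
  · exact hxy

lemma normW_zero {p : ℝ} (hp : 0 < p) : normW p 0 = 0 := by
  unfold normW; split_ifs with h
  · exact Real.zero_rpow (by positivity)
  · rfl

lemma normW_continuousAt {p : ℝ} (hp : 0 < p) (x : ℝ) : ContinuousAt (normW p) x := by
  rcases le_or_gt 1 p with h | h
  · have hW : normW p = fun x : ℝ => x ^ (1 / p) := funext fun x => if_pos h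
    rw [hW]
    exact Real.continuousAt_rpow_const x (1 / p) (Or.inr (by positivity))
  · have hW : normW p = fun x : ℝ => x := funext fun x => if_neg (not_le.mpr h)
    rw [hW]; exact continuousAt_id

lemma partition_mem {n : ℕ} {t : ℕ → ℝ} (h : IsPartition n t) :
    ∀ i ≤ n, t i ∈ Set.Icc (0:ℝ) 1 := by
  obtain ⟨hn, h0, h1, hlt⟩ := h
  have mono : ∀ j, j ≤ n → ∀ i, i ≤ j → t i ≤ t j := by
    intro j
    induction j with
    | zero => intro _ i hi; exact le_of_eq (by rw [Nat.le_zero.mp hi])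
    | succ k ih =>
      intro hk i hi
      rcases Nat.eq_or_lt_of_le hi with rfl | hlt'
      · exact le_rfl
      · exact (ih (by omega) i (by omega)).trans (hlt k (by omega)).le
  intro i hi
  exact ⟨h0 ▸ mono i hi 0 (Nat.zero_le _), h1 ▸ mono n le_rfl i hi⟩

lemma sum_le_card_mul {n : ℕ} {a : ℕ → ℝ} {c : ℝ}
    (h : ∀ i ∈ Finset.range n, a i ≤ c) :
    ∑ i ∈ Finset.range n, a i ≤ (n : ℝ) * c := by
  calc ∑ i ∈ Finset.range n, a i ≤ ∑ _i ∈ Finset.range n, c := Finset.sum_le_sum h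
    _ = (n : ℝ) * c := by simp [Finset.sum_const, mul_comm]

lemma VpPart_le {p : ℝ} (hp : 0 < p)
    (hd : ∀ u v w : M, dist (u + w) (v + w) = dist u v)
    (f g : ℝ → ℝ → M) {n : ℕ} {t : ℕ → ℝ} {m : ℕ} {s : ℕ → ℝ}
    (ht0 : t 0 = 0) (hs0 : s 0 = 0) {δ : ℝ}
    (hgrid : ∀ i ≤ n, ∀ j ≤ m, dist (f (t i) (s j)) (g (t i) (s j)) ≤ δ) :
    VpPart p f g n t m s ≤
      normW p ((n : ℝ) * (2 * δ) ^ p) + normW p ((m : ℝ) * (2 * δ) ^ p)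
        + normW p ((m : ℝ) * ((n : ℝ) * (4 * δ) ^ p)) := by
  have hgrid0 : ∀ i ≤ n, dist (f (t i) 0) (g (t i) 0) ≤ δ := by
    intro i hi; have := hgrid i hi 0 (Nat.zero_le _); rwa [hs0] at this
  have hgrid0' : ∀ j ≤ m, dist (f 0 (s j)) (g 0 (s j)) ≤ δ := by
    intro j hj; have := hgrid 0 (Nat.zero_le _) j hj; rwa [ht0] at this
  have h1 : wSum1J p f g n t ≤ (n : ℝ) * (2 * δ) ^ p := by
    apply sum_le_card_mul
    intro i hi
    rw [Finset.mem_range] at hi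
    have hb : dist (f (t (i+1)) 0 + g (t i) 0) (f (t i) 0 + g (t (i+1)) 0) ≤ 2 * δ := by
      have hcr := dist_cross hd (f (t (i+1)) 0) (f (t i) 0) (g (t (i+1)) 0) (g (t i) 0)
      rw [add_comm (g (t (i+1)) 0) (f (t i) 0)] at hcr
      have h1' := hgrid0 (i+1) (by omega)
      have h2' := hgrid0 i (by omega)
      linarith
    exact Real.rpow_le_rpow dist_nonneg hb hp.le
  have h2 : wSum2J p f g m s ≤ (m : ℝ) * (2 * δ) ^ p := by
    apply sum_le_card_mul
    intro j hj
    rw [Finset.mem_range] at hj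
    have hb : dist (f 0 (s (j+1)) + g 0 (s j)) (f 0 (s j) + g 0 (s (j+1))) ≤ 2 * δ := by
      have hcr := dist_cross hd (f 0 (s (j+1))) (f 0 (s j)) (g 0 (s (j+1))) (g 0 (s j))
      rw [add_comm (g 0 (s (j+1))) (f 0 (s j))] at hcr
      have h1' := hgrid0' (j+1) (by omega)
      have h2' := hgrid0' j (by omega)
      linarith
    exact Real.rpow_le_rpow dist_nonneg hb hp.le
  have h3 : wSum12J p f g n t m s ≤ (m : ℝ) * ((n : ℝ) * (4 * δ) ^ p) := by
    apply sum_le_card_mul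
    intro j hj
    rw [Finset.mem_range] at hj
    apply sum_le_card_mul
    intro i hi
    rw [Finset.mem_range] at hi
    have hb : dist (f (t (i+1)) (s (j+1)) + f (t i) (s j)
            + g (t (i+1)) (s j) + g (t i) (s (j+1)))
         (g (t (i+1)) (s (j+1)) + g (t i) (s j)
            + f (t (i+1)) (s j) + f (t i) (s (j+1))) ≤ 4 * δ := by
      have hcr := dist_cross4 hd (f (t (i+1)) (s (j+1))) (f (t i) (s j))
        (f (t (i+1)) (s j)) (f (t i) (s (j+1)))
        (g (t (i+1)) (s (j+1))) (g (t i) (s j))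
        (g (t (i+1)) (s j)) (g (t i) (s (j+1)))
      have a1 := hgrid (i+1) (by omega) (j+1) (by omega)
      have a2 := hgrid i (by omega) j (by omega)
      have a3 := hgrid (i+1) (by omega) j (by omega)
      have a4 := hgrid i (by omega) (j+1) (by omega)
      linarith
    exact Real.rpow_le_rpow dist_nonneg hb hp.le
  have w1nn : 0 ≤ wSum1J p f g n t :=
    Finset.sum_nonneg fun i _ => Real.rpow_nonneg dist_nonneg p
  have w2nn : 0 ≤ wSum2J p f g m s :=
    Finset.sum_nonneg fun i _ => Real.rpow_nonneg dist_nonneg p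
  have w3nn : 0 ≤ wSum12J p f g n t m s :=
    Finset.sum_nonneg fun j _ => Finset.sum_nonneg fun i _ => Real.rpow_nonneg dist_nonneg p
  exact add_le_add (add_le_add (normW_mono hp w1nn h1) (normW_mono hp w2nn h2))
    (normW_mono hp w3nn h3)

end Aux

/-- Sufficient conditions for precompactness (total boundedness w.r.t. `ρ_p`)
of a set `A ⊆ WBV_p(I×I, M)`: (i) `A` is joint equivariated, and (ii) each
pointwise section `{f(t,s) : f ∈ A}` is precompact in `M`. -/
theorem WBVp_precompact [CompleteSpace M] (p : ℝ) (hp : 0 < p)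
    (hd : ∀ u v w : M, dist (u + w) (v + w) = dist u v)
    (A : Set (ℝ → ℝ → M)) (hA : ∀ f ∈ A, MemWBV p f)
    (hequi : ∀ ε > (0:ℝ), ∃ n t m s, IsPartition n t ∧ IsPartition m s ∧
      ∀ f ∈ A, ∀ g ∈ A, VpJ p f g ≤ ε + VpPart p f g n t m s)
    (hpt : ∀ t ∈ Set.Icc (0:ℝ) 1, ∀ s ∈ Set.Icc (0:ℝ) 1,
      IsCompact (closure {x : M | ∃ f ∈ A, f t s = x})) :
    ∀ ε > (0:ℝ), ∃ G : Set (ℝ → ℝ → M), G ⊆ A ∧ G.Finite ∧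
      ∀ f ∈ A, ∃ g ∈ G, rhoP p f g < ε := by
  intro ε hε
  rcases A.eq_empty_or_nonempty with hAe | ⟨f₀, hf₀⟩
  · exact ⟨∅, by simp, Set.finite_empty, by simp [hAe]⟩
  obtain ⟨n, t, m, s, hPt, hPs, hEq⟩ := hequi (ε/2) (by positivity)
  have ht0 : t 0 = 0 := hPt.2.1
  have hs0 : s 0 = 0 := hPs.2.1
  -- choose δ by continuity
  set h : ℝ → ℝ := fun δ => δ + normW p ((n : ℝ) * (2 * δ) ^ p)
      + normW p ((m : ℝ) * (2 * δ) ^ p)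
      + normW p ((m : ℝ) * ((n : ℝ) * (4 * δ) ^ p)) with hhdef
  have hinner : ∀ c : ℝ, ContinuousAt (fun δ : ℝ => (c * δ) ^ p) 0 := by
    intro c
    have h1 : ContinuousAt (fun x : ℝ => x ^ p) (c * 0) :=
      Real.continuousAt_rpow_const _ p (Or.inr hp.le)
    exact h1.comp (continuousAt_const.mul continuousAt_id)
  have hcont : ContinuousAt h 0 := by
    apply ContinuousAt.add
    apply ContinuousAt.add
    apply ContinuousAt.add
    · exact continuousAt_id
    · exact (normW_continuousAt hp _).comp (continuousAt_const.mul (hinner 2))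
    · exact (normW_continuousAt hp _).comp (continuousAt_const.mul (hinner 2))
    · exact (normW_continuousAt hp _).comp
        (continuousAt_const.mul (continuousAt_const.mul (hinner 4)))
  have h0 : h 0 = 0 := by
    have hz : ((2:ℝ) * 0) ^ p = 0 := by
      rw [mul_zero]; exact Real.zero_rpow hp.ne'
    have hz4 : ((4:ℝ) * 0) ^ p = 0 := by
      rw [mul_zero]; exact Real.zero_rpow hp.ne'
    simp only [hhdef, mul_zero, Real.zero_rpow hp.ne', zero_mul, normW_zero hp, add_zero]
  obtain ⟨δ', hδ'pos, hδ'⟩ := Metric.continuousAt_iff.mp hcont (ε/2) (by positivity)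
  set δ : ℝ := δ' / 2 with hδdef
  have hδpos : 0 < δ := by positivity
  have hhδ : h δ < ε / 2 := by
    have hdist : dist δ 0 < δ' := by
      rw [Real.dist_eq, sub_zero, abs_of_pos hδpos]
      simp only [hδdef]; linarith
    have := hδ' hdist
    rw [h0, Real.dist_eq, sub_zero] at this
    exact lt_of_le_of_lt (le_abs_self _) this
  have htmem := partition_mem hPt
  have hsmem := partition_mem hPs
  -- totally bounded family of grid values
  classical
  set Phi : (ℝ → ℝ → M) → (Fin (n+1) × Fin (m+1) → M) :=
    fun f ij => f (t ij.1) (s ij.2) with hPhidef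
  have hK : IsCompact (Set.pi Set.univ fun ij : Fin (n+1) × Fin (m+1) =>
      closure {x : M | ∃ f ∈ A, f (t ij.1) (s ij.2) = x}) :=
    isCompact_univ_pi fun ij =>
      hpt _ (htmem _ (Nat.lt_succ_iff.mp ij.1.isLt)) _ (hsmem _ (Nat.lt_succ_iff.mp ij.2.isLt))
  have hsub : Phi '' A ⊆ Set.pi Set.univ (fun ij : Fin (n+1) × Fin (m+1) =>
      closure {x : M | ∃ f ∈ A, f (t ij.1) (s ij.2) = x}) := by
    rintro _ ⟨f, hf, rfl⟩ ij _
    exact subset_closure ⟨f, hf, rfl⟩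
  have hTB : TotallyBounded (Phi '' A) := hK.totallyBounded.subset hsub
  obtain ⟨T, hTsub, hTfin, hTcover⟩ :=
    totallyBounded_iff_subset.mp hTB _ (Metric.dist_mem_uniformity hδpos)
  set c : (Fin (n+1) × Fin (m+1) → M) → (ℝ → ℝ → M) :=
    fun y => if hy : ∃ g ∈ A, Phi g = y then hy.choose else f₀ with hcdef
  have hc : ∀ y ∈ T, c y ∈ A ∧ Phi (c y) = y := by
    intro y hy
    obtain ⟨g, hg, hgy⟩ := hTsub hy
    have hex : ∃ g ∈ A, Phi g = y := ⟨g, hg, hgy⟩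
    simp only [hcdef, dif_pos hex]
    exact hex.choose_spec
  refine ⟨c '' T, ?_, hTfin.image c, ?_⟩
  · rintro _ ⟨y, hy, rfl⟩
    exact (hc y hy).1
  intro f hf
  have hfm : Phi f ∈ ⋃ y ∈ T, {x | (x, y) ∈ {q : _ × _ | dist q.1 q.2 < δ}} :=
    hTcover ⟨f, hf, rfl⟩
  rw [Set.mem_iUnion₂] at hfm
  obtain ⟨y, hyT, hyd⟩ := hfm
  refine ⟨c y, ⟨y, hyT, rfl⟩, ?_⟩
  obtain ⟨hgA, hgy⟩ := hc y hyT
  set g : ℝ → ℝ → M := c y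
  have hgrid : ∀ i ≤ n, ∀ j ≤ m, dist (f (t i) (s j)) (g (t i) (s j)) ≤ δ := by
    intro i hi j hj
    have hlt : dist (Phi f) (Phi g) < δ := by rw [hgy]; exact hyd
    exact (dist_le_pi_dist (Phi f) (Phi g) (⟨i, by omega⟩, ⟨j, by omega⟩)).trans hlt.le
  have hd00 : dist (f 0 0) (g 0 0) ≤ δ := by
    have := hgrid 0 (Nat.zero_le _) 0 (Nat.zero_le _)
    rwa [ht0, hs0] at this
  have hVpart := VpPart_le hp hd f g ht0 hs0 hgrid
  have hVJ := hEq f hf g hgA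
  have : rhoP p f g ≤ δ + ε/2 + (normW p ((n : ℝ) * (2 * δ) ^ p)
      + normW p ((m : ℝ) * (2 * δ) ^ p)
      + normW p ((m : ℝ) * ((n : ℝ) * (4 * δ) ^ p))) := by
    unfold rhoP
    linarith
  have hle : rhoP p f g ≤ ε/2 + h δ := by
    simp only [hhdef] at this ⊢
    linarith
  linarith
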